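/- arXiv:2511.10918 — 2 statements merged into one kernel-verified Lean document; each statement's English description precedes it below -/
import Mathlib

section
/- Let φ : M × Σ → ℝ be smooth, set 𝒱 = ∇_ξφ(M × Σ), and suppose there exist smooth c : M × Σ → ℝ and smooth A, B : 𝒱 × Σ → Sym_{n−1}(ℝ) with ∇_ξ²φ(x,ξ) = A(∇_ξφ(x,ξ), ξ) + c(x,ξ)·B(∇_ξφ(x,ξ), ξ) on M × Σ. Then for all (x,ξ) ∈ M × Σ one has the matrix identity (G(x,ξ)·∇_x)∇_ξ²φ(x,ξ) = ((G(x,ξ)·∇_x)c(x,ξ)) · B(∇_ξφ(x,ξ), ξ), and applying the derivative twice, (G(x,ξ)·∇_x)²∇_ξ²φ(x,ξ) = ((G(x,ξ)·∇_x)²c(x,ξ)) · B(∇_ξφ(x,ξ), ξ). -/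
/-! The map `y ↦ ∇_ξφ(y, ξ)` is constant to first order along the Gauss direction `G`: the
derivative of `∂_{ξ_j}φ` in direction `G` is `det(∂_ξ∇_xφ | ∂_{ξ_j}∇_xφ)`, a determinant with a
repeated column. Hence `G·∇_x` kills `A(∇_ξφ, ξ)` and `B(∇_ξφ, ξ)`, and the Leibniz rule applied to
`∇_ξ²φ = A + c B` leaves `((G·∇_x)c) B`. Since this identity holds on all of the open set `M`, the
same argument applied to it (with `A = 0` and `(G·∇_x)c` in place of `c`) gives the second one. -/

open Metric Set Topology MeasureTheory

noncomputable section

/-- ξ-gradient ∇_ξφ(x,ξ). -/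
def gradXi (n : ℕ) (φ : (Fin n → ℝ) → (Fin (n-1) → ℝ) → ℝ)
    (x : Fin n → ℝ) (ξ : Fin (n-1) → ℝ) : Fin (n-1) → ℝ :=
  fun j => fderiv ℝ (φ x) ξ (Pi.single j (1:ℝ))

/-- ξ-Hessian ∇_ξ²φ(x,ξ). -/
def hessXi (n : ℕ) (φ : (Fin n → ℝ) → (Fin (n-1) → ℝ) → ℝ)
    (x : Fin n → ℝ) (ξ : Fin (n-1) → ℝ) : Matrix (Fin (n-1)) (Fin (n-1)) ℝ :=
  Matrix.of fun i j => fderiv ℝ (fun η => gradXi n φ x η i) ξ (Pi.single j (1:ℝ))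

/-- Mixed Hessian ∇_x∇_ξφ(x,ξ) : entry (i,j) is ∂_{x_i}∂_{ξ_j}φ. -/
def mixedHess (n : ℕ) (φ : (Fin n → ℝ) → (Fin (n-1) → ℝ) → ℝ)
    (x : Fin n → ℝ) (ξ : Fin (n-1) → ℝ) : Matrix (Fin n) (Fin (n-1)) ℝ :=
  Matrix.of fun i j => fderiv ℝ (fun y => gradXi n φ y ξ j) x (Pi.single i (1:ℝ))

/-- Gauss map: G(x,ξ)ᵢ = det(∂_{ξ_1}∇_xφ, …, ∂_{ξ_{n-1}}∇_xφ, eᵢ), so that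
⟨G(x,ξ), w⟩ = det(∂_{ξ_1}∇_xφ, …, ∂_{ξ_{n-1}}∇_xφ, w) for all w. -/
def gaussMap (n : ℕ) (φ : (Fin n → ℝ) → (Fin (n-1) → ℝ) → ℝ)
    (x : Fin n → ℝ) (ξ : Fin (n-1) → ℝ) : Fin n → ℝ :=
  fun i => Matrix.det (Matrix.of fun a b : Fin n =>
    if h : (b : ℕ) < n - 1 then mixedHess n φ x ξ a ⟨(b : ℕ), h⟩
    else (Pi.single i (1:ℝ) : Fin n → ℝ) a)

/-- Directional derivative (G(x,ξ)·∇_x) f at x. -/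
def GD (n : ℕ) (φ : (Fin n → ℝ) → (Fin (n-1) → ℝ) → ℝ)
    (f : (Fin n → ℝ) → ℝ) (ξ : Fin (n-1) → ℝ) (x : Fin n → ℝ) : ℝ :=
  fderiv ℝ f x (gaussMap n φ x ξ)

/-- The matrix (G(x,ξ)·∇_x)∇_ξ²φ(x,ξ). -/
def GDhess (n : ℕ) (φ : (Fin n → ℝ) → (Fin (n-1) → ℝ) → ℝ)
    (x : Fin n → ℝ) (ξ : Fin (n-1) → ℝ) : Matrix (Fin (n-1)) (Fin (n-1)) ℝ :=
  Matrix.of fun i j => GD n φ (fun y => hessXi n φ y ξ i j) ξ x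

/-- The matrix (G(x,ξ)·∇_x)²∇_ξ²φ(x,ξ). -/
def GD2hess (n : ℕ) (φ : (Fin n → ℝ) → (Fin (n-1) → ℝ) → ℝ)
    (x : Fin n → ℝ) (ξ : Fin (n-1) → ℝ) : Matrix (Fin (n-1)) (Fin (n-1)) ℝ :=
  Matrix.of fun i j => GD n φ (fun y => GD n φ (fun z => hessXi n φ z ξ i j) ξ y) ξ x

/-- Bourgain's condition on M × Σ. -/
def BourgainCond (n : ℕ) (φ : (Fin n → ℝ) → (Fin (n-1) → ℝ) → ℝ)
    (M : Set (Fin n → ℝ)) (Ω : Set (Fin (n-1) → ℝ)) : Prop :=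
  ∃ lam : (Fin n → ℝ) → (Fin (n-1) → ℝ) → ℝ,
    ∀ x ∈ M, ∀ ξ ∈ Ω, GD2hess n φ x ξ = lam x ξ • GDhess n φ x ξ

/-- Hörmander-type phase function: smooth, (H1) and (H2) on M × Σ. -/
def IsHormander (n : ℕ) (φ : (Fin n → ℝ) → (Fin (n-1) → ℝ) → ℝ)
    (M : Set (Fin n → ℝ)) (Ω : Set (Fin (n-1) → ℝ)) : Prop :=
  ContDiffOn ℝ (⊤ : ℕ∞) (fun q : (Fin n → ℝ) × (Fin (n-1) → ℝ) => φ q.1 q.2) (M ×ˢ Ω) ∧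
  (∀ x ∈ M, ∀ ξ ∈ Ω, (mixedHess n φ x ξ).rank = n - 1) ∧
  (∀ x ∈ M, ∀ ξ ∈ Ω, (GDhess n φ x ξ).det ≠ 0)

/-- The point (x̄, t) ∈ ℝⁿ. -/
def toPt (n : ℕ) (xb : Fin (n-1) → ℝ) (t : ℝ) : Fin n → ℝ :=
  fun i => if h : (i : ℕ) < n - 1 then xb ⟨(i : ℕ), h⟩ else t

/-- line_{ξ,v} = {(v,0) − s(ξ,1) : s ∈ ℝ} ⊆ ℝⁿ. -/
def lineSet (n : ℕ) (ξ v : Fin (n-1) → ℝ) : Set (Fin n → ℝ) :=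
  {p | ∃ s : ℝ, p = toPt n v 0 - s • toPt n ξ 1}

end


open scoped ContDiff

namespace Matrix

variable {R : Type*} [CommRing R] {n : ℕ}

/-- The generalized cross product of the columns of `N`: `⟪crossVec N, w⟫ = det (N | w)`. -/
def crossVec (N : Matrix (Fin n) (Fin (n - 1)) R) (i : Fin n) : R :=
  det (of fun a b : Fin n =>
    if h : (b : ℕ) < n - 1 then N a ⟨b, h⟩ else (Pi.single i (1 : R) : Fin n → R) a)

/-- With `K = (N | 0)`, `crossVec N` is the last column of `adjugate Kᵀ`, so `⟪crossVec N, N_j⟫`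
is the off-diagonal entry `(j, n - 1)` of `Kᵀ * adjugate Kᵀ = det Kᵀ • 1`. -/
theorem crossVec_vecMul (N : Matrix (Fin n) (Fin (n - 1)) R) : crossVec N ᵥ* N = 0 := by
  funext j
  have hj := j.isLt
  set l : Fin n := ⟨n - 1, by omega⟩
  set K : Matrix (Fin n) (Fin n) R :=
    of fun a b => if h : (b : ℕ) < n - 1 then N a ⟨b, h⟩ else 0
  have hcross : ∀ i, crossVec N i = adjugate Kᵀ i l := by
    intro i
    rw [adjugate_apply, updateRow_transpose, det_transpose, crossVec]
    congr 1
    ext a b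
    by_cases h : (b : ℕ) < n - 1
    · have : b ≠ l := fun hb => by simp [hb, l] at h
      simp [this, h, K]
    · have : b = l := Fin.ext (by simp [l]; omega)
      simp [this, l]
  have hjl : (⟨j, by omega⟩ : Fin n) ≠ l := fun h => by
    have := congrArg Fin.val h
    simp [l] at this
    omega
  calc (crossVec N ᵥ* N) j = (Kᵀ * adjugate Kᵀ) ⟨j, by omega⟩ l := by
        simp only [vecMul, dotProduct, mul_apply, hcross, transpose_apply, K, of_apply, j.isLt,
          dif_pos, mul_comm]
    _ = 0 := by simp [mul_adjugate, hjl]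

end Matrix

section Calculus

variable {𝕜 E : Type*} [NontriviallyNormedField 𝕜] [NormedAddCommGroup E] [NormedSpace 𝕜 E]
  {x : E} {m : WithTop ℕ∞}

theorem ContDiffAt.matrix_det {ι : Type*} [Fintype ι] [DecidableEq ι] {F : E → Matrix ι ι 𝕜}
    (hF : ∀ i j, ContDiffAt 𝕜 m (fun y => F y i j) x) :
    ContDiffAt 𝕜 m (fun y => (F y).det) x := by
  simp only [Matrix.det_apply, Units.smul_def, zsmul_eq_mul]
  exact ContDiffAt.sum fun σ _ => contDiffAt_const.mul (contDiffAt_prod fun i _ => hF (σ i) i)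

theorem fderiv_apply_eq_of_eventuallyEq_add_mul {f a b c : E → 𝕜} {v : E}
    (ha : DifferentiableAt 𝕜 a x) (hb : DifferentiableAt 𝕜 b x) (hc : DifferentiableAt 𝕜 c x)
    (hav : fderiv 𝕜 a x v = 0) (hbv : fderiv 𝕜 b x v = 0)
    (hf : f =ᶠ[𝓝 x] fun y => a y + c y * b y) :
    fderiv 𝕜 f x v = fderiv 𝕜 c x v * b x := by
  rw [((ha.hasFDerivAt.add (hc.hasFDerivAt.mul hb.hasFDerivAt)).congr_of_eventuallyEq hf).fderiv]
  simp [hav, hbv, mul_comm]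

end Calculus

section PhaseFunction

variable {n : ℕ} {φ : (Fin n → ℝ) → (Fin (n-1) → ℝ) → ℝ} {x : Fin n → ℝ} {ξ : Fin (n-1) → ℝ}
  {k m : WithTop ℕ∞}

theorem contDiffAt_gradXi
    (hφ : ContDiffAt ℝ k (fun q : (Fin n → ℝ) × (Fin (n-1) → ℝ) => φ q.1 q.2) (x, ξ))
    (hm : m + 1 ≤ k) (j : Fin (n-1)) :
    ContDiffAt ℝ m (fun y => gradXi n φ y ξ j) x :=
  (ContDiffAt.fderiv (f := φ) hφ contDiffAt_const hm).clm_apply contDiffAt_const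

theorem contDiffAt_mixedHess
    (hφ : ContDiffAt ℝ k (fun q : (Fin n → ℝ) × (Fin (n-1) → ℝ) => φ q.1 q.2) (x, ξ))
    (hm : m + 1 + 1 ≤ k) (a : Fin n) (b : Fin (n-1)) :
    ContDiffAt ℝ m (fun y => mixedHess n φ y ξ a b) x :=
  ((contDiffAt_gradXi hφ hm b).fderiv_right le_rfl).clm_apply contDiffAt_const

theorem gaussMap_eq_crossVec : gaussMap n φ x ξ = (mixedHess n φ x ξ).crossVec := rfl

theorem contDiffAt_gaussMap
    (hφ : ContDiffAt ℝ k (fun q : (Fin n → ℝ) × (Fin (n-1) → ℝ) => φ q.1 q.2) (x, ξ))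
    (hm : m + 1 + 1 ≤ k) :
    ContDiffAt ℝ m (fun y => gaussMap n φ y ξ) x := by
  refine contDiffAt_pi.2 fun i => ContDiffAt.matrix_det fun a b => ?_
  by_cases h : (b : ℕ) < n - 1
  · simpa [h] using contDiffAt_mixedHess hφ hm a ⟨b, h⟩
  · simpa [h] using contDiffAt_const

theorem contDiffAt_GD {f : (Fin n → ℝ) → ℝ} (hf : ContDiffAt ℝ k f x)
    (hφ : ContDiffAt ℝ k (fun q : (Fin n → ℝ) × (Fin (n-1) → ℝ) => φ q.1 q.2) (x, ξ))
    (hm : m + 1 + 1 ≤ k) :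
    ContDiffAt ℝ m (fun y => GD n φ f ξ y) x :=
  (hf.fderiv_right (le_self_add.trans hm)).clm_apply (contDiffAt_gaussMap hφ hm)

theorem fderiv_gradXi_gaussMap (hg : ∀ j, DifferentiableAt ℝ (fun y => gradXi n φ y ξ j) x) :
    fderiv ℝ (fun y => gradXi n φ y ξ) x (gaussMap n φ x ξ) = 0 := by
  rw [fderiv_pi hg]
  funext j
  rw [ContinuousLinearMap.pi_apply, gaussMap_eq_crossVec, pi_eq_sum_univ' (Matrix.crossVec _)]
  simp only [map_sum, map_smul, smul_eq_mul]
  exact congrFun (Matrix.crossVec_vecMul (mixedHess n φ x ξ)) j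

theorem differentiableAt_comp_gradXi_and_GD_eq_zero {V : Set (Fin (n-1) → ℝ)}
    {ψ : (Fin (n-1) → ℝ) → ℝ} (hψ : DifferentiableWithinAt ℝ ψ V (gradXi n φ x ξ))
    (hV : ∀ᶠ y in 𝓝 x, gradXi n φ y ξ ∈ V)
    (hφ : ContDiffAt ℝ k (fun q : (Fin n → ℝ) × (Fin (n-1) → ℝ) => φ q.1 q.2) (x, ξ))
    (hk : 2 ≤ k) :
    DifferentiableAt ℝ (fun y => ψ (gradXi n φ y ξ)) x ∧
      GD n φ (fun y => ψ (gradXi n φ y ξ)) ξ x = 0 := by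
  have hg j : DifferentiableAt ℝ (fun y => gradXi n φ y ξ j) x :=
    (contDiffAt_gradXi hφ (m := 1) hk j).differentiableAt one_ne_zero
  have hD : HasFDerivAt (fun y => ψ (gradXi n φ y ξ)) _ x :=
    hψ.hasFDerivWithinAt.comp_hasFDerivAt x (differentiableAt_pi.2 hg).hasFDerivAt hV
  refine ⟨hD.differentiableAt, ?_⟩
  rw [GD, hD.fderiv, ContinuousLinearMap.comp_apply, fderiv_gradXi_gaussMap hg, map_zero]

end PhaseFunction

theorem stmt3_general (n : ℕ)
    (M : Set (Fin n → ℝ)) (Ω : Set (Fin (n-1) → ℝ))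
    (hMo : IsOpen M) (hΩo : IsOpen Ω)
    (φ : (Fin n → ℝ) → (Fin (n-1) → ℝ) → ℝ)
    (hφ : ContDiffOn ℝ (⊤ : ℕ∞) (fun q : (Fin n → ℝ) × (Fin (n-1) → ℝ) => φ q.1 q.2) (M ×ˢ Ω))
    (V : Set (Fin (n-1) → ℝ))
    (hV : V = (fun q : (Fin n → ℝ) × (Fin (n-1) → ℝ) => gradXi n φ q.1 q.2) '' (M ×ˢ Ω))
    (c : (Fin n → ℝ) → (Fin (n-1) → ℝ) → ℝ)
    (A B : (Fin (n-1) → ℝ) → (Fin (n-1) → ℝ) → Matrix (Fin (n-1)) (Fin (n-1)) ℝ)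
    (hc : ContDiffOn ℝ (⊤ : ℕ∞) (fun q : (Fin n → ℝ) × (Fin (n-1) → ℝ) => c q.1 q.2) (M ×ˢ Ω))
    (hA : ∀ i j, ContDiffOn ℝ (⊤ : ℕ∞)
      (fun q : (Fin (n-1) → ℝ) × (Fin (n-1) → ℝ) => A q.1 q.2 i j) (V ×ˢ Ω))
    (hBsm : ∀ i j, ContDiffOn ℝ (⊤ : ℕ∞)
      (fun q : (Fin (n-1) → ℝ) × (Fin (n-1) → ℝ) => B q.1 q.2 i j) (V ×ˢ Ω))
    (heq : ∀ x ∈ M, ∀ ξ ∈ Ω,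
      hessXi n φ x ξ = A (gradXi n φ x ξ) ξ + c x ξ • B (gradXi n φ x ξ) ξ) :
    ∀ x ∈ M, ∀ ξ ∈ Ω,
      GDhess n φ x ξ = (GD n φ (fun y => c y ξ) ξ x) • B (gradXi n φ x ξ) ξ ∧
      GD2hess n φ x ξ =
        (GD n φ (fun y => GD n φ (fun z => c z ξ) ξ y) ξ x) • B (gradXi n φ x ξ) ξ := by
  intro x hx ξ hξ
  have hMΩ : ∀ y ∈ M, M ×ˢ Ω ∈ 𝓝 (y, ξ) := fun y hy => (hMo.prod hΩo).mem_nhds ⟨hy, hξ⟩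
  have hcξ : ∀ y ∈ M, ContDiffAt ℝ ∞ (fun z => c z ξ) y := fun y hy =>
    (hc.contDiffAt (hMΩ y hy)).comp y (contDiffAt_id.prodMk contDiffAt_const)
  have hgV : ∀ y ∈ M, gradXi n φ y ξ ∈ V := fun y hy => hV ▸ ⟨(y, ξ), ⟨hy, hξ⟩, rfl⟩
  have hfirst : ∀ T : (Fin (n-1) → ℝ) → (Fin (n-1) → ℝ) → Matrix (Fin (n-1)) (Fin (n-1)) ℝ,
      (∀ i j, ContDiffOn ℝ ∞ (fun q : (Fin (n-1) → ℝ) × (Fin (n-1) → ℝ) => T q.1 q.2 i j)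
        (V ×ˢ Ω)) → ∀ y ∈ M, ∀ i j,
      DifferentiableAt ℝ (fun z => T (gradXi n φ z ξ) ξ i j) y ∧
        GD n φ (fun z => T (gradXi n φ z ξ) ξ i j) ξ y = 0 := fun T hT y hy i j =>
    differentiableAt_comp_gradXi_and_GD_eq_zero
      (((hT i j).comp (contDiffOn_id.prodMk contDiffOn_const) fun v hv => ⟨hv, hξ⟩).differentiableOn
        (by simp) _ (hgV y hy))
      (Filter.mem_of_superset (hMo.mem_nhds hy) hgV) (hφ.contDiffAt (hMΩ y hy)) (by norm_cast)
  have hGDhess : ∀ y ∈ M, ∀ i j, GD n φ (fun z => hessXi n φ z ξ i j) ξ y =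
      GD n φ (fun z => c z ξ) ξ y * B (gradXi n φ y ξ) ξ i j := fun y hy i j =>
    fderiv_apply_eq_of_eventuallyEq_add_mul (hfirst A hA y hy i j).1 (hfirst B hBsm y hy i j).1
      ((hcξ y hy).differentiableAt (by simp)) (hfirst A hA y hy i j).2 (hfirst B hBsm y hy i j).2
      (Filter.eventually_of_mem (hMo.mem_nhds hy) fun z hz => by simp [heq z hz ξ hξ])
  refine ⟨Matrix.ext fun i j => hGDhess x hx i j, Matrix.ext fun i j => ?_⟩
  have hGDc : DifferentiableAt ℝ (fun y => GD n φ (fun z => c z ξ) ξ y) x :=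
    (contDiffAt_GD (m := 1) (hcξ x hx) (hφ.contDiffAt (hMΩ x hx)) (by norm_cast)).differentiableAt
      one_ne_zero
  exact fderiv_apply_eq_of_eventuallyEq_add_mul (differentiableAt_const 0)
    (hfirst B hBsm x hx i j).1 hGDc (by simp) (hfirst B hBsm x hx i j).2
    (Filter.eventually_of_mem (hMo.mem_nhds hx) fun y hy => by simp [hGDhess y hy i j])

theorem stmt3 (n : ℕ) (hn : 2 ≤ n)
    (M : Set (Fin n → ℝ)) (Ω : Set (Fin (n-1) → ℝ))
    (hMo : IsOpen M) (hMc : IsConnected M) (hΩo : IsOpen Ω) (hΩc : IsConnected Ω)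
    (φ : (Fin n → ℝ) → (Fin (n-1) → ℝ) → ℝ)
    (hφ : ContDiffOn ℝ (⊤ : ℕ∞) (fun q : (Fin n → ℝ) × (Fin (n-1) → ℝ) => φ q.1 q.2) (M ×ˢ Ω))
    (V : Set (Fin (n-1) → ℝ))
    (hV : V = (fun q : (Fin n → ℝ) × (Fin (n-1) → ℝ) => gradXi n φ q.1 q.2) '' (M ×ˢ Ω))
    (c : (Fin n → ℝ) → (Fin (n-1) → ℝ) → ℝ)
    (A B : (Fin (n-1) → ℝ) → (Fin (n-1) → ℝ) → Matrix (Fin (n-1)) (Fin (n-1)) ℝ)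
    (hc : ContDiffOn ℝ (⊤ : ℕ∞) (fun q : (Fin n → ℝ) × (Fin (n-1) → ℝ) => c q.1 q.2) (M ×ˢ Ω))
    (hA : ∀ i j, ContDiffOn ℝ (⊤ : ℕ∞)
      (fun q : (Fin (n-1) → ℝ) × (Fin (n-1) → ℝ) => A q.1 q.2 i j) (V ×ˢ Ω))
    (hBsm : ∀ i j, ContDiffOn ℝ (⊤ : ℕ∞)
      (fun q : (Fin (n-1) → ℝ) × (Fin (n-1) → ℝ) => B q.1 q.2 i j) (V ×ˢ Ω))
    (hsymm : ∀ v ξ, (v, ξ) ∈ V ×ˢ Ω → (A v ξ).IsSymm ∧ (B v ξ).IsSymm)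
    (heq : ∀ x ∈ M, ∀ ξ ∈ Ω,
      hessXi n φ x ξ = A (gradXi n φ x ξ) ξ + c x ξ • B (gradXi n φ x ξ) ξ) :
    ∀ x ∈ M, ∀ ξ ∈ Ω,
      GDhess n φ x ξ = (GD n φ (fun y => c y ξ) ξ x) • B (gradXi n φ x ξ) ξ ∧
      GD2hess n φ x ξ =
        (GD n φ (fun y => GD n φ (fun z => c z ξ) ξ y) ξ x) • B (gradXi n φ x ξ) ξ :=
  stmt3_general n M Ω hMo hΩo φ hφ V hV c A B hc hA hBsm heq
end

section
/- Consider Bourgain's worst-case phase φ_worst(x₁,x₂,t,ξ₁,ξ₂) = x₁ξ₁ + x₂ξ₂ + tξ₁ξ₂ + (1/2)t²ξ₂² on ℝ³ × ℝ². Its φ-curves are ℓ_{ξ,v} = {(v₁ − tξ₂, v₂ − tξ₁ − t²ξ₂, t) : t ∈ ℝ} (i.e., ∇_ξφ_worst((x₁,x₂,t),ξ) = v exactly for these points). The diffeomorphism F(x₁,x₂,t) = (x₁, x₂ − t·x₁, t) of ℝ³ straightens all of them simultaneously: for all (ξ,v) ∈ ℝ² × ℝ², F(ℓ_{ξ,v})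 ⊆ {(v₁,v₂,0) + t·(−ξ₂, −(ξ₁ + v₁), 1) : t ∈ ℝ}, which is the line through (v₁,v₂,0) with direction (ξ₂, ξ₁ + v₁, −1); in particular F maps every φ_worst-curve onto a straight line, but the direction of the image line depends on v and not only on ξ. -/
noncomputable section

/-- Bourgain's worst-case phase function on ℝ³ × ℝ², with points written (x₁,x₂,t). -/
def φworst (x : ℝ × ℝ × ℝ) (ξ : ℝ × ℝ) : ℝ :=
  x.1 * ξ.1 + x.2.1 * ξ.2 + x.2.2 * ξ.1 * ξ.2 + (1/2) * x.2.2^2 * ξ.2^2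

/-- The ξ-gradient of a phase on ℝ³ × ℝ². -/
def grad2 (φ : (ℝ × ℝ × ℝ) → (ℝ × ℝ) → ℝ) (x : ℝ × ℝ × ℝ) (ξ : ℝ × ℝ) : ℝ × ℝ :=
  (fderiv ℝ (φ x) ξ (1, 0), fderiv ℝ (φ x) ξ (0, 1))

/-- The straightening diffeomorphism F(x₁,x₂,t) = (x₁, x₂ − t·x₁, t). -/
def Fworst (x : ℝ × ℝ × ℝ) : ℝ × ℝ × ℝ := (x.1, x.2.1 - x.2.2 * x.1, x.2.2)

lemma grad2_φworst (x : ℝ × ℝ × ℝ) (ξ : ℝ × ℝ) :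
    grad2 φworst x ξ = (x.1 + x.2.2 * ξ.2, x.2.1 + x.2.2 * ξ.1 + x.2.2^2 * ξ.2) := by
  have hfst : HasFDerivAt (fun η : ℝ × ℝ => η.1) (ContinuousLinearMap.fst ℝ ℝ ℝ) ξ :=
    hasFDerivAt_fst
  have hsnd : HasFDerivAt (fun η : ℝ × ℝ => η.2) (ContinuousLinearMap.snd ℝ ℝ ℝ) ξ :=
    hasFDerivAt_snd
  have hφ : HasFDerivAt (φworst x) _ ξ :=
    (((hfst.const_mul x.1).add (hsnd.const_mul x.2.1)).add
      ((hfst.mul hsnd).const_mul x.2.2)).add ((hsnd.pow 2).const_mul ((1/2) * x.2.2^2))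
      |>.congr_of_eventuallyEq (.of_forall fun η => by
        simp only [φworst, Pi.add_apply, Pi.mul_apply]; ring)
  rw [grad2, hφ.fderiv]
  simp only [smul_add, one_div, Nat.add_one_sub_one, pow_one, nsmul_eq_mul, Nat.cast_ofNat,
    add_apply, smul_apply, ContinuousLinearMap.coe_fst',
    ContinuousLinearMap.coe_snd', smul_eq_mul, mul_one, mul_zero, add_zero, zero_add, Prod.ext_iff,
    add_right_inj, true_and]
  ring

/-- The φworst-curve `ℓ_{ξ,v}`, parametrised by the time coordinate `t`. -/
def φworstCurve (ξ v : ℝ × ℝ) (t : ℝ) : ℝ × ℝ × ℝ :=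
  (v.1 - t * ξ.2, v.2 - t * ξ.1 - t^2 * ξ.2, t)

lemma grad2_φworst_eq_iff (x₁ x₂ t : ℝ) (ξ v : ℝ × ℝ) :
    grad2 φworst (x₁, x₂, t) ξ = v ↔
      x₁ = v.1 - t * ξ.2 ∧ x₂ = v.2 - t * ξ.1 - t^2 * ξ.2 := by
  rw [grad2_φworst, Prod.ext_iff]
  constructor <;> rintro ⟨h₁, h₂⟩ <;> constructor <;> linarith

lemma setOf_grad2_φworst_eq_range (ξ v : ℝ × ℝ) :
    {x | grad2 φworst x ξ = v} = Set.range (φworstCurve ξ v) := by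
  ext ⟨x₁, x₂, t⟩
  rw [Set.mem_ofPred_eq, grad2_φworst_eq_iff]
  simp only [Set.mem_range, φworstCurve, Prod.ext_iff]
  constructor
  · rintro ⟨h₁, h₂⟩
    exact ⟨t, h₁.symm, h₂.symm, rfl⟩
  · rintro ⟨s, h₁, h₂, rfl⟩
    exact ⟨h₁.symm, h₂.symm⟩

/-- On `ℓ_{ξ,v}` one has `t x₁ = t v₁ - t² ξ₂`, so `x₂ - t x₁` cancels the quadratic term. -/
lemma Fworst_comp_φworstCurve (ξ v : ℝ × ℝ) (t : ℝ) :
    Fworst (φworstCurve ξ v t) = (v.1 + t * (-ξ.2), v.2 + t * (-(ξ.1 + v.1)), 0 + t * 1) := by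
  simp only [Fworst, φworstCurve, Prod.mk.injEq]
  refine ⟨by ring, by ring, by ring⟩

theorem stmt8 (ξ₁ ξ₂ v₁ v₂ : ℝ) :
    (∀ x₁ x₂ t : ℝ,
      grad2 φworst (x₁, x₂, t) (ξ₁, ξ₂) = (v₁, v₂) ↔
        x₁ = v₁ - t * ξ₂ ∧ x₂ = v₂ - t * ξ₁ - t^2 * ξ₂) ∧
    (Fworst '' {x : ℝ × ℝ × ℝ | grad2 φworst x (ξ₁, ξ₂) = (v₁, v₂)}
      = {q : ℝ × ℝ × ℝ | ∃ t : ℝ,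
          q = (v₁ + t * (-ξ₂), v₂ + t * (-(ξ₁ + v₁)), 0 + t * 1)}) := by
  refine ⟨fun x₁ x₂ t => grad2_φworst_eq_iff x₁ x₂ t _ _, ?_⟩
  rw [setOf_grad2_φworst_eq_range, ← Set.range_comp]
  ext q
  simp only [Set.mem_range, Function.comp_apply, Fworst_comp_φworstCurve, Set.mem_ofPred_eq,
    eq_comm]
end
end
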